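/- Let μ ∈ ℂ with μ ≠ 0, and let φ̃ and φ̌ be the closest and second-closest N-PSK phases to arg(μ) (N ≥ 2). Then the reliability R = Re(μ e^{−iφ̃}) − Re(μ e^{−iφ̌}) is nonnegative, and R = 0 if and only if arg(μ) is exactly halfway (mod 2π/N) between two adjacent PSK phases. -/

import Mathlib

open Complex Real

private lemma cos_mono_aux (N : ℕ) (hN : 2 ≤ N) (r : ℤ) (h1 : 1 ≤ r) (h2 : r ≤ N) :
    Real.cos ((r : ℝ) * π / N) ≤ Real.cos (π / N) := by
  have hNR : (0:ℝ) < N := by exact_mod_cast (by omega : 0 < N)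
  apply Real.cos_le_cos_of_nonneg_of_le_pi
  · exact div_nonneg Real.pi_pos.le hNR.le
  · rw [div_le_iff₀ hNR]
    have : (r:ℝ) ≤ N := by exact_mod_cast h2
    nlinarith [Real.pi_pos]
  · have h1' : (1:ℝ) ≤ r := by exact_mod_cast h1
    have hπ := Real.pi_pos
    rw [div_le_div_iff₀ hNR hNR]
    nlinarith [mul_nonneg (sub_nonneg.mpr h1') (mul_pos hπ hNR).le]

private lemma odd_cos_le (N : ℕ) (hN : 2 ≤ N) (o : ℤ) (ho : Odd o) :
    Real.cos ((o : ℝ) * π / N) ≤ Real.cos (π / N) := by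
  have hNR : (0:ℝ) < N := by exact_mod_cast (by omega : 0 < N)
  set q : ℤ := o % (2 * N) with hq
  have h2N : (0:ℤ) < 2 * N := by positivity
  have hq0 : 0 ≤ q := Int.emod_nonneg o (by omega)
  have hqlt : q < 2 * N := Int.emod_lt_of_pos o h2N
  have hid : 2 * (N:ℤ) * (o / (2 * N)) + q = o := Int.mul_ediv_add_emod o (2 * N)
  have hqodd : Odd q := by
    obtain ⟨c, hc⟩ := ho
    exact ⟨c - N * (o / (2 * N)), by linear_combination hc + hid⟩
  have hcast : (2:ℝ) * N * ((o / (2 * (N:ℤ)) : ℤ) : ℝ) + (q:ℝ) = (o:ℝ) := by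
    exact_mod_cast hid
  have hcos_eq : Real.cos ((o:ℝ) * π / N) = Real.cos ((q:ℝ) * π / N) := by
    have hstep : (o:ℝ) * π / N = (q:ℝ) * π / N + ((o / (2 * (N:ℤ)) : ℤ) : ℝ) * (2 * π) := by
      rw [← hcast]; field_simp; ring
    rw [hstep, Real.cos_add_int_mul_two_pi]
  rw [hcos_eq]
  have hq1 : 1 ≤ q := by obtain ⟨c, hc⟩ := hqodd; omega
  by_cases hcase : q ≤ N
  · exact cos_mono_aux N hN q hq1 hcase
  · push_neg at hcase
    set r : ℤ := 2 * N - q with hr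
    have hstep : (q:ℝ) * π / N = 2 * π - (r:ℝ) * π / N := by
      have : (r:ℝ) = 2 * N - q := by push_cast [hr]; ring
      rw [this]; field_simp; ring
    rw [hstep, Real.cos_two_pi_sub]
    exact cos_mono_aux N hN r (by omega) (by omega)

private lemma phase_inj (N : ℕ) (hN : 2 ≤ N) (a b : Fin N)
    (h : ∃ k : ℤ, 2 * π * (a : ℕ) / N - 2 * π * (b : ℕ) / N = 2 * π * k) : a = b := by
  have hNR : (0:ℝ) < N := by exact_mod_cast (by omega : 0 < N)
  obtain ⟨k, hk⟩ := h
  have hπ := Real.pi_pos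
  have hab : ((a:ℕ):ℝ) - ((b:ℕ):ℝ) = k * N := by
    field_simp at hk
    nlinarith [hk]
  have habZ : ((a:ℕ):ℤ) - ((b:ℕ):ℤ) = k * N := by exact_mod_cast hab
  have ha := a.isLt
  have hb := b.isLt
  have : (a:ℕ) = (b:ℕ) := by
    rcases lt_trichotomy k 0 with h' | h' | h' <;> nlinarith [habZ]
  exact Fin.ext this

theorem reliability_nonneg (N : ℕ) (hN : 2 ≤ N) (μ : ℂ) (hμ : μ ≠ 0)
    (mt mc : Fin N) (hmm : mt ≠ mc)
    (φt φc : ℝ)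
    (hφt : φt = 2 * π * (mt : ℕ) / N) (hφc : φc = 2 * π * (mc : ℕ) / N)
    (hbest : ∀ m : Fin N,
      Real.cos (Complex.arg μ - 2 * π * (m : ℕ) / N) ≤ Real.cos (Complex.arg μ - φt))
    (hsecond : ∀ m : Fin N, m ≠ mt →
      Real.cos (Complex.arg μ - 2 * π * (m : ℕ) / N) ≤ Real.cos (Complex.arg μ - φc)) :
    0 ≤ (μ * Complex.exp (-(φt : ℂ) * Complex.I)).re
        - (μ * Complex.exp (-(φc : ℂ) * Complex.I)).re ∧
    ((μ * Complex.exp (-(φt : ℂ) * Complex.I)).re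
        - (μ * Complex.exp (-(φc : ℂ) * Complex.I)).re = 0 ↔
      ∃ m : ℤ, (Complex.arg μ : Real.Angle) = (((2 * m + 1) * π / N : ℝ) : Real.Angle)) := by
  have hNR : (0:ℝ) < N := by exact_mod_cast (by omega : 0 < N)
  have hπ := Real.pi_pos
  set θ := Complex.arg μ with hθdef
  have habs : 0 < ‖μ‖ := by simpa using hμ
  have key : ∀ φ : ℝ, (μ * Complex.exp (-(φ : ℂ) * Complex.I)).re
      = ‖μ‖ * Real.cos (θ - φ) := by
    intro φ
    conv_lhs => rw [← Complex.norm_mul_exp_arg_mul_I μ]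
    rw [mul_assoc, ← Complex.exp_add]
    have : (Complex.arg μ : ℂ) * Complex.I + (-(φ:ℂ) * Complex.I) = ((θ - φ : ℝ) : ℂ) * Complex.I := by
      rw [hθdef]; push_cast; ring
    rw [this, Complex.re_ofReal_mul, Complex.exp_ofReal_mul_I_re]
  rw [key φt, key φc, ← mul_sub]
  have hbc : Real.cos (θ - φc) ≤ Real.cos (θ - φt) := by
    have := hbest mc; rwa [← hφc] at this
  -- the key equivalence
  have main : Real.cos (θ - φt) = Real.cos (θ - φc) ↔
      ∃ m : ℤ, (θ : Real.Angle) = (((2 * m + 1) * π / N : ℝ) : Real.Angle) := by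
    constructor
    · intro hcc
      have hang : ((θ - φt : ℝ) : Real.Angle) = ((θ - φc : ℝ) : Real.Angle) ∨
          ((θ - φt : ℝ) : Real.Angle) = -((θ - φc : ℝ) : Real.Angle) := by
        apply Real.Angle.cos_eq_iff_eq_or_eq_neg.mp
        rw [Real.Angle.cos_coe, Real.Angle.cos_coe]; exact hcc
      rcases hang with h | h
      · exfalso
        rw [Real.Angle.angle_eq_iff_two_pi_dvd_sub] at h
        obtain ⟨k, hk⟩ := h
        refine hmm (phase_inj N hN mt mc ⟨-k, ?_⟩)
        rw [← hφt, ← hφc]; push_cast; linarith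
      · rw [← Real.Angle.coe_neg, Real.Angle.angle_eq_iff_two_pi_dvd_sub] at h
        obtain ⟨k, hk⟩ := h
        -- 2θ - φt - φc = 2πk, so θ = S π / N with S = mt + mc + kN
        set S : ℤ := (mt : ℕ) + (mc : ℕ) + k * N with hS
        have hθval : θ = (S : ℝ) * π / N := by
          rw [hφt, hφc] at hk
          have hSc : (S:ℝ) = (mt:ℕ) + (mc:ℕ) + k * N := by push_cast [hS]; ring
          rw [hSc]; field_simp; field_simp at hk; linarith
        rcases Int.even_or_odd S with hpar | hpar
        · exfalso
          obtain ⟨s, hs⟩ := hpar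
          have hNZ : (0:ℤ) < N := by omega
          set jv : ℤ := s % N with hjv
          have hj0 : 0 ≤ jv := Int.emod_nonneg s (by omega)
          have hjlt : jv < N := Int.emod_lt_of_pos s hNZ
          have hidj : (N:ℤ) * (s / N) + jv = s := Int.mul_ediv_add_emod s N
          set j : Fin N := ⟨jv.toNat, by omega⟩ with hj
          have hjZ : ((j : ℕ) : ℤ) = jv := by simp [hj, Int.toNat_of_nonneg hj0]
          have hjcast : ((j : ℕ) : ℝ) = (jv : ℝ) := by exact_mod_cast hjZ
          have hcos1 : Real.cos (θ - 2 * π * (j : ℕ) / N) = 1 := by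
            have : θ - 2 * π * (j : ℕ) / N = ((s / N : ℤ) : ℝ) * (2 * π) := by
              rw [hθval, hjcast]
              have hsc : (s:ℝ) = (N:ℝ) * ((s / N : ℤ) : ℝ) + (jv:ℝ) := by exact_mod_cast hidj.symm
              have hSc : (S:ℝ) = 2 * s := by exact_mod_cast hs ▸ (by push_cast; ring : ((s + s : ℤ):ℝ) = 2 * s)
              rw [hSc, hsc]; field_simp; ring
            rw [this, Real.cos_int_mul_two_pi]
          have h1t : Real.cos (θ - φt) = 1 :=
            le_antisymm (Real.cos_le_one _) (hcos1 ▸ hbest j)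
          have h1c : Real.cos (θ - φc) = 1 := by rw [← hcc]; exact h1t
          obtain ⟨a, ha⟩ := (Real.cos_eq_one_iff _).mp h1t
          obtain ⟨b, hb⟩ := (Real.cos_eq_one_iff _).mp h1c
          refine hmm (phase_inj N hN mt mc ⟨b - a, ?_⟩)
          rw [← hφt, ← hφc]; push_cast; linarith
        · obtain ⟨m, hm⟩ := hpar
          refine ⟨m, ?_⟩
          rw [hθval]
          congr 1
          have : (S:ℝ) = 2 * m + 1 := by exact_mod_cast hm
          rw [this]
    · intro ⟨m, hm⟩
      rw [Real.Angle.angle_eq_iff_two_pi_dvd_sub] at hm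
      obtain ⟨l, hl⟩ := hm
      -- θ = (2m+1)π/N + 2πl
      have hrep : ∀ jn : ℕ, θ - 2 * π * jn / N = ((2 * (m + l * N - jn) + 1 : ℤ) : ℝ) * π / N := by
        intro jn
        have hθval : θ = (2 * (m:ℝ) + 1) * π / N + 2 * π * l := by linarith
        rw [hθval]; push_cast; field_simp; ring
      have hNZ : (0:ℤ) < N := by omega
      -- j1 and j2
      have mkj : ∀ x : ℤ, ∃ j : Fin N, ∃ t : ℤ, x - (j:ℕ) = N * t := by
        intro x
        have h0 : 0 ≤ x % N := Int.emod_nonneg x (by omega)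
        have hlt : x % N < N := Int.emod_lt_of_pos x hNZ
        refine ⟨⟨(x % N).toNat, by omega⟩, x / N, ?_⟩
        have := Int.mul_ediv_add_emod x N
        simp only [Int.toNat_of_nonneg h0]
        omega
      obtain ⟨j1, t1, ht1⟩ := mkj (m + l * N)
      obtain ⟨j2, t2, ht2⟩ := mkj (m + l * N + 1)
      have hj1cos : Real.cos (θ - 2 * π * (j1 : ℕ) / N) = Real.cos (π / N) := by
        rw [hrep j1]
        have : ((2 * (m + l * N - (j1:ℕ)) + 1 : ℤ) : ℝ) * π / N = π / N + t1 * (2 * π) := by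
          have : (2 * (m + l * N - (j1:ℕ)) + 1 : ℤ) = 2 * N * t1 + 1 := by
            linear_combination 2 * ht1
          rw [this]; push_cast; field_simp; ring
        rw [this, Real.cos_add_int_mul_two_pi]
      have hj2cos : Real.cos (θ - 2 * π * (j2 : ℕ) / N) = Real.cos (π / N) := by
        rw [hrep j2]
        have : ((2 * (m + l * N - (j2:ℕ)) + 1 : ℤ) : ℝ) * π / N = -(π / N) + t2 * (2 * π) := by
          have : (2 * (m + l * N - (j2:ℕ)) + 1 : ℤ) = 2 * N * t2 - 1 := by
            linear_combination 2 * ht2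
          rw [this]; push_cast; field_simp; ring
        rw [this, Real.cos_add_int_mul_two_pi, Real.cos_neg]
      have hj12 : j1 ≠ j2 := by
        intro h
        have hjj : ((j1:ℕ):ℤ) = ((j2:ℕ):ℤ) := by rw [h]
        have hd : (N:ℤ) * (t2 - t1) = 1 := by linear_combination hjj - ht2 + ht1
        have := Int.le_of_dvd one_pos ⟨t2 - t1, hd.symm⟩
        omega
      have hbt : Real.cos (θ - φt) = Real.cos (π / N) := by
        apply le_antisymm
        · rw [hφt, hrep mt]; exact odd_cos_le N hN _ ⟨m + l * N - (mt:ℕ), by ring⟩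
        · rw [← hj1cos]; exact hbest j1
      have hct : Real.cos (θ - φc) = Real.cos (π / N) := by
        apply le_antisymm
        · linarith [hbc, hbt]
        · by_cases hcase : j1 = mt
          · rw [← hj2cos]; exact hsecond j2 (by rw [← hcase]; exact fun h => hj12 h.symm)
          · rw [← hj1cos]; exact hsecond j1 hcase
      rw [hbt, hct]
  constructor
  · exact mul_nonneg habs.le (by linarith)
  · rw [mul_eq_zero]
    constructor
    · rintro (h | h)
      · exact absurd h habs.ne'
      · exact main.mp (by linarith)
    · intro h
      right
      rw [main.mpr h]; ring
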